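/- For all integers x ≥ 1 and m ≥ 2x+1, if c′ ∈ C(m+1,x) starts, from the left, with 1^y 0^{x+1} for some y with 2 ≤ y ≤ x+1 (Group 3), and c denotes the binary word formed by the m rightmost bits of c′, then c ∈ C(m,x) and g(m+1,x,c′) = g(m,x,c) + N(m−x,x); that is, the shift in codeword indices for Group 3 is ζ₃ = N(m−x,x). -/

import Mathlib

/-!
Split the codewords `d` of length `m + 1` preceding `c'` according to whether their top two
bits agree. Since `c'` starts with `11`, a codeword whose top two bits agree precedes `c'` exactly
when its lower `m` bits precede `c`, and dropping the repeated top bit is a bijection onto the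
codewords of length `m`: these contribute `g(m, x, c)`. A codeword whose top two bits differ
precedes `c'` automatically, and the forbidden patterns force the `x + 1` bits below its top bit
to be equal; so it is determined by its lowest `m - x` bits, which range over all of `C(m - x, x)`.
-/

/-- `noForbidden m x c` says the binary word `c = (c_{m-1}, …, c_0)` contains no contiguous
subword of the form `0 1^y 0` or `1 0^y 1` for any `1 ≤ y ≤ x`. -/
def noForbidden (m x : ℕ) (c : Fin m → Bool) : Prop :=
  ∀ j y : ℕ, 1 ≤ y → y ≤ x → (h : j + y + 1 < m) →
    ¬ ((∀ k, 1 ≤ k → (hk : k ≤ y) → c ⟨j + k, by omega⟩ = ! c ⟨j, by omega⟩) ∧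
        c ⟨j + y + 1, h⟩ = c ⟨j, by omega⟩)

/-- `N(m, x)`: the cardinality of the LOCO code `C(m, x)`. -/
noncomputable def locoN (m x : ℕ) : ℕ := Nat.card {c : Fin m → Bool // noForbidden m x c}

/-- `N(k, x)` extended to integer `k` by the convention `N(k, x) = 2` for `k ≤ 1`. -/
noncomputable def Nex (k : ℤ) (x : ℕ) : ℤ := if k ≤ 1 then 2 else (locoN k.toNat x : ℤ)

/-- Strict lexicographic order on binary words, comparing bits from `c_{m-1}`
(most significant) down to `c_0`, with `0 < 1`. -/
def lexLt (m : ℕ) (d c : Fin m → Bool) : Prop :=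
  ∃ i : Fin m, d i = false ∧ c i = true ∧ ∀ j : Fin m, (i : ℕ) < (j : ℕ) → d j = c j

/-- The index `g(m, x, c)` of a codeword: the number of codewords of `C(m, x)` that
precede `c` in lexicographic order. -/
noncomputable def locoIdx (m x : ℕ) (c : Fin m → Bool) : ℕ :=
  Nat.card {d : Fin m → Bool // noForbidden m x d ∧ lexLt m d c}

open Fin

theorem Nat.card_subtype_eq_card_and_add_card_and_not {α : Type*} [Finite α] (p q : α → Prop) :
    Nat.card {a // p a} = Nat.card {a // p a ∧ q a} + Nat.card {a // p a ∧ ¬ q a} := by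
  classical
  rw [← Nat.card_sum]
  exact Nat.card_congr ((Equiv.sumCompl fun a : {a // p a} => q a).symm.trans
    (Equiv.sumCongr (Equiv.subtypeSubtypeEquivSubtypeInter p q)
      (Equiv.subtypeSubtypeEquivSubtypeInter p (¬ q ·))))

def repeatLast {α : Type*} {k : ℕ} (N : ℕ) (v : Fin (k + 1) → α) : Fin N → α :=
  fun i => v ⟨min i k, by omega⟩

section repeatLast

variable {α : Type*} {k N : ℕ}

theorem repeatLast_apply_of_le (v : Fin (k + 1) → α) {i : ℕ} (hi : i < N) (hik : i ≤ k) :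
    repeatLast N v ⟨i, hi⟩ = v ⟨i, by omega⟩ := by
  simp only [repeatLast, Nat.min_eq_left hik]

theorem repeatLast_apply_of_ge (v : Fin (k + 1) → α) (i : Fin N) (hki : k ≤ i) :
    repeatLast N v i = v (last k) := by
  simp only [repeatLast, Nat.min_eq_right hki]
  rfl

theorem repeatLast_castLE (v : Fin (k + 1) → α) (hN : k + 1 ≤ N) :
    (fun i => repeatLast N v (castLE hN i)) = v := by
  funext i
  exact repeatLast_apply_of_le v _ (Nat.lt_succ_iff.mp i.2)

theorem repeatLast_castLE_of_apply_eq (w : Fin N → α) (hN : k + 1 ≤ N)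
    (hw : ∀ i : Fin N, k ≤ i → w i = w ⟨k, hN⟩) :
    repeatLast N (fun i : Fin (k + 1) => w (castLE hN i)) = w := by
  funext i
  rcases le_total (i : ℕ) k with hik | hki
  · exact repeatLast_apply_of_le _ i.2 hik
  · rw [repeatLast_apply_of_ge _ i hki, hw i hki]
    rfl

theorem init_repeatLast (v : Fin (k + 1) → α) : init (repeatLast (k + 2) v) = v :=
  repeatLast_castLE v (k + 1).le_succ

theorem repeatLast_init {d : Fin (k + 2) → α} (hd : d (last (k + 1)) = d (castSucc (last k))) :
    repeatLast (k + 2) (init d) = d :=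
  repeatLast_castLE_of_apply_eq d (k + 1).le_succ fun i hki => by
    rcases eq_or_lt_of_le hki with hik | hik
    · exact congrArg d (Fin.ext hik.symm)
    · rw [show i = last (k + 1) from Fin.ext (by simp only [val_last]; omega)]
      exact hd

theorem repeatLast_last_eq (v : Fin (k + 1) → α) :
    repeatLast (k + 2) v (last (k + 1)) = repeatLast (k + 2) v (castSucc (last k)) := by
  rw [repeatLast_apply_of_ge v _ (by simp), repeatLast_apply_of_ge v _ (by simp)]

end repeatLast

section noForbidden

variable {n x : ℕ}

theorem noForbidden.castLE {d : Fin n → Bool} (hd : noForbidden n x d) {k : ℕ} (hk : k ≤ n) :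
    noForbidden k x (fun i => d (castLE hk i)) :=
  fun j y hy1 hy2 h hwin => hd j y hy1 hy2 (by omega) hwin

theorem noForbidden.init {d : Fin (n + 1) → Bool} (hd : noForbidden (n + 1) x d) :
    noForbidden n x (init d) :=
  hd.castLE n.le_succ

theorem noForbidden_repeatLast {k : ℕ} {v : Fin (k + 1) → Bool} (hv : noForbidden (k + 1) x v) :
    noForbidden n x (repeatLast n v) := by
  rintro j y hy1 hy2 h ⟨hmid, hend⟩
  by_cases hjy : j + y + 1 ≤ k
  · refine hv j y hy1 hy2 (by omega) ⟨fun s hs1 hs2 => ?_, ?_⟩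
    · simpa only [repeatLast_apply_of_le v _ (by omega : j + s ≤ k),
        repeatLast_apply_of_le v _ (by omega : j ≤ k)] using hmid s hs1 hs2
    · simpa only [repeatLast_apply_of_le v _ hjy,
        repeatLast_apply_of_le v _ (by omega : j ≤ k)] using hend
  · -- the window would end inside the constant tail, where two consecutive bits agree
    have hlast := hmid y hy1 le_rfl
    rw [repeatLast_apply_of_ge v _ (by simp only; omega), ← hend,
      repeatLast_apply_of_ge v _ (by simp only; omega)] at hlast
    exact (Bool.eq_not_self _).mp hlast

theorem noForbidden_snoc_not_last {e : Fin (n + 1) → Bool} (he : noForbidden (n + 1) x e)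
    (hrun : ∀ i : Fin (n + 1), n ≤ i + x → e i = e (last n)) :
    noForbidden (n + 2) x (snoc e (!e (last n))) := by
  have hsnoc : ∀ i (hi : i < n + 1),
      snoc (α := fun _ => Bool) e (!e (last n)) (⟨i, by omega⟩ : Fin (n + 2)) =
        e ⟨i, hi⟩ :=
    fun i hi => snoc_castSucc (α := fun _ => Bool) _ e ⟨i, hi⟩
  rintro j y hy1 hy2 h ⟨hmid, hend⟩
  by_cases hjy : j + y + 1 < n + 1
  · refine he j y hy1 hy2 hjy ⟨fun s hs1 hs2 => ?_, ?_⟩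
    · simpa (disch := omega) only [hsnoc] using hmid s hs1 hs2
    · simpa (disch := omega) only [hsnoc] using hend
  · have hj : (⟨j + y + 1, h⟩ : Fin (n + 2)) = last (n + 1) :=
      Fin.ext (by simp only [val_last]; omega)
    rw [hj, snoc_last, hsnoc j (by omega), hrun ⟨j, by omega⟩ (by simp only; omega)] at hend
    exact (Bool.not_eq_self _).mp hend

theorem noForbidden.apply_eq_of_last_ne {d : Fin (n + 2) → Bool} (hd : noForbidden (n + 2) x d)
    (hne : d (last (n + 1)) ≠ d (castSucc (last n))) (i : Fin (n + 2)) (hi1 : n ≤ i + x)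
    (hi2 : (i : ℕ) ≤ n) : d i = d (castSucc (last n)) := by
  obtain ⟨i, hi⟩ := i
  induction hni : n - i using Nat.strong_induction_on generalizing i with
  | _ t ih =>
    simp only at hi1 hi2
    rcases eq_or_lt_of_le hi2 with rfl | hlt
    · rfl
    by_contra hdi
    refine hd i (n - i) (by omega) (by omega) (by omega) ⟨fun s hs1 hs2 => ?_, ?_⟩
    · rw [ih (n - (i + s)) (by omega) (i + s) (by omega) (by simp only; omega)
        (by simp only; omega) rfl]
      exact Bool.eq_not_of_ne (Ne.symm hdi)
    · have hlast : (⟨i + (n - i) + 1, by omega⟩ : Fin (n + 2)) = last (n + 1) :=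
        Fin.ext (by simp only [val_last]; omega)
      rw [hlast, Bool.eq_not_of_ne hne]
      exact (Bool.eq_not_of_ne hdi).symm

end noForbidden

section lexLt

variable {n : ℕ}

theorem lexLt_succ_iff {d c : Fin (n + 1) → Bool} :
    lexLt (n + 1) d c ↔ (d (last n) = false ∧ c (last n) = true) ∨
      (d (last n) = c (last n) ∧ lexLt n (init d) (init c)) := by
  constructor
  · rintro ⟨i, hdi, hci, hagree⟩
    induction i using lastCases with
    | last => exact Or.inl ⟨hdi, hci⟩
    | cast i =>
      exact Or.inr ⟨hagree _ (castSucc_lt_last i), i, hdi, hci, fun j hj => hagree _ hj⟩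
  · rintro (⟨hdl, hcl⟩ | ⟨hl, i, hdi, hci, hagree⟩)
    · exact ⟨last n, hdl, hcl, fun j hj => absurd hj (not_lt.mpr (le_last j))⟩
    · refine ⟨castSucc i, hdi, hci, fun j hj => ?_⟩
      induction j using lastCases with
      | last => exact hl
      | cast j => exact hagree j hj

theorem lexLt_iff_lexLt_init {d c : Fin (n + 2) → Bool}
    (hd : d (last (n + 1)) = d (castSucc (last n)))
    (hc : c (last (n + 1)) = c (castSucc (last n))) :
    lexLt (n + 2) d c ↔ lexLt (n + 1) (init d) (init c) := by
  rw [lexLt_succ_iff, hd, hc, lexLt_succ_iff (d := init d)]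
  constructor
  · rintro (hlt | ⟨-, hlt⟩)
    · exact Or.inl hlt
    · exact hlt
  · rintro (hlt | ⟨heq, hlt⟩)
    · exact Or.inl hlt
    · exact Or.inr ⟨heq, Or.inr ⟨heq, hlt⟩⟩

theorem lexLt_of_last_ne {d c : Fin (n + 2) → Bool}
    (hcl : c (last (n + 1)) = true) (hcl' : c (castSucc (last n)) = true)
    (hd : d (last (n + 1)) ≠ d (castSucc (last n))) : lexLt (n + 2) d c := by
  rw [lexLt_succ_iff, hcl]
  cases hdl : d (last (n + 1))
  · exact Or.inl ⟨rfl, rfl⟩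
  · rw [hdl, ne_eq, eq_comm, Bool.not_eq_true] at hd
    exact Or.inr ⟨rfl, lexLt_succ_iff.mpr (Or.inl ⟨hd, hcl'⟩)⟩

end lexLt

section count

variable {n x : ℕ}

theorem card_noForbidden_lexLt_last_eq {c : Fin (n + 2) → Bool}
    (hc : c (last (n + 1)) = c (castSucc (last n))) :
    Nat.card {d // (noForbidden (n + 2) x d ∧ lexLt (n + 2) d c) ∧
      d (last (n + 1)) = d (castSucc (last n))} = locoIdx (n + 1) x (init c) :=
  Nat.card_congr
    { toFun := fun d => ⟨init d.1, d.2.1.1.init, (lexLt_iff_lexLt_init d.2.2 hc).1 d.2.1.2⟩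
      invFun := fun e => ⟨repeatLast (n + 2) e.1,
        ⟨noForbidden_repeatLast e.2.1, (lexLt_iff_lexLt_init (repeatLast_last_eq e.1) hc).2
          (by rw [init_repeatLast]; exact e.2.2)⟩, repeatLast_last_eq e.1⟩
      left_inv := fun d => Subtype.ext (repeatLast_init d.2.2)
      right_inv := fun e => Subtype.ext (init_repeatLast e.1) }

theorem card_noForbidden_last_ne {k : ℕ} :
    Nat.card {d : Fin (k + x + 2) → Bool // noForbidden (k + x + 2) x d ∧
      d (last (k + x + 1)) ≠ d (castSucc (last (k + x)))} = locoN (k + 1) x :=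
  have hk : k + 1 ≤ k + x + 2 := by omega
  Nat.card_congr
    { toFun := fun d => ⟨fun i => d.1 (castLE hk i), d.2.1.castLE hk⟩
      invFun := fun v =>
        ⟨snoc (repeatLast (k + x + 1) v.1) (!repeatLast (k + x + 1) v.1 (last _)),
        noForbidden_snoc_not_last (noForbidden_repeatLast v.2) fun i hi => by
          rw [repeatLast_apply_of_ge v.1 i (by omega), repeatLast_apply_of_ge v.1 _ (by simp)],
        by simpa only [snoc_last, snoc_castSucc] using Bool.not_ne_self _⟩
      left_inv := fun ⟨d, hd, hne⟩ => Subtype.ext <| by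
        have hrun (i : Fin (k + x + 1)) (hi : k ≤ i) : init d i = init d (last (k + x)) :=
          hd.apply_eq_of_last_ne hne (castSucc i) (by simp; omega)
            (by simp only [val_castSucc]; omega)
        have hinit : repeatLast (k + x + 1) (fun i : Fin (k + 1) => d (castLE hk i)) = init d :=
          repeatLast_castLE_of_apply_eq (init d) (by omega) fun i hi =>
            (hrun i hi).trans (hrun _ le_rfl).symm
        have hlast : (!init d (last (k + x))) = d (last (k + x + 1)) :=
          (Bool.eq_not_of_ne hne).symm
        simp only
        rw [hinit, hlast, snoc_init_self]
      right_inv := fun v => Subtype.ext <| funext fun i =>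
        (snoc_castSucc (α := fun _ => Bool) _ _ (castLE (by omega : k + 1 ≤ k + x + 1) i)).trans
          (congrFun (repeatLast_castLE v.1 (by omega)) i) }

end count

theorem locoN_one (x : ℕ) : locoN 1 x = 2 := by
  have hall : ∀ c : Fin 1 → Bool, noForbidden 1 x c := fun _ j y _ _ h => absurd h (by omega)
  rw [locoN, Nat.card_congr (Equiv.subtypeUnivEquiv hall)]
  simp

theorem Nex_natCast_add_one (k x : ℕ) : Nex ((k : ℤ) + 1) x = locoN (k + 1) x := by
  unfold Nex
  split_ifs with hk
  · obtain rfl : k = 0 := by omega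
    rw [locoN_one]
    rfl
  · rw [show ((k : ℤ) + 1).toNat = k + 1 by omega]

theorem locoIdx_eq_locoIdx_init_add_locoN {k x : ℕ} {c : Fin (k + x + 2) → Bool}
    (hcl : c (last (k + x + 1)) = true) (hcl' : c (castSucc (last (k + x))) = true) :
    locoIdx (k + x + 2) x c = locoIdx (k + x + 1) x (init c) + locoN (k + 1) x := by
  rw [locoIdx, Nat.card_subtype_eq_card_and_add_card_and_not _
      fun d => d (last (k + x + 1)) = d (castSucc (last (k + x))),
    card_noForbidden_lexLt_last_eq (hcl.trans hcl'.symm), ← card_noForbidden_last_ne]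
  congr 1
  exact Nat.card_congr <| Equiv.subtypeEquivRight fun d =>
    ⟨fun h => ⟨h.1.1, h.2⟩, fun h => ⟨⟨h.1, lexLt_of_last_ne hcl hcl' h.2⟩, h.2⟩⟩

/-- For all `x ≥ 1` and `m ≥ 2x + 1`, if `c' ∈ C(m + 1, x)` starts from the
left with `1^y 0^{x+1}` for some `2 ≤ y ≤ x + 1` (Group 3), and `c` is the word formed by the
`m` rightmost bits of `c'`, then `c ∈ C(m, x)` and
`g(m + 1, x, c') = g(m, x, c) + N(m - x, x)`, i.e. the index shift is `ζ₃ = N(m - x, x)`. -/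
theorem loco_group3_shift (m x : ℕ) (hm : 2 * x + 1 ≤ m)
    (c' : Fin (m + 1) → Bool) (hc' : noForbidden (m + 1) x c')
    (hy : ∃ y, 2 ≤ y ∧ y ≤ x + 1 ∧
      (∀ k, k < y → c' ⟨m - k, by omega⟩ = true) ∧
      (∀ k, y ≤ k → k ≤ y + x → c' ⟨m - k, by omega⟩ = false)) :
    noForbidden m x (fun i => c' (Fin.castSucc i)) ∧
    (locoIdx (m + 1) x c' : ℤ)
      = (locoIdx m x (fun i => c' (Fin.castSucc i)) : ℤ) + Nex ((m : ℤ) - (x : ℤ)) x := by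
  obtain ⟨y, hy2, -, hones, -⟩ := hy
  obtain ⟨k, rfl⟩ : ∃ k, m = k + x + 1 := ⟨m - x - 1, by omega⟩
  have hcl : c' (last (k + x + 1)) = true :=
    (congrArg c' (Fin.ext (by simp))).trans (hones 0 (by omega))
  have hcl' : c' (castSucc (last (k + x))) = true :=
    (congrArg c' (Fin.ext (by simp))).trans (hones 1 (by omega))
  refine ⟨hc'.init, ?_⟩
  rw [locoIdx_eq_locoIdx_init_add_locoN hcl hcl',
    show ((k + x + 1 : ℕ) : ℤ) - x = k + 1 by omega, Nex_natCast_add_one]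
  push_cast
  rfl
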